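/- arXiv:2005.05813 — 7 statements merged into one kernel-verified Lean document; each statement's English description precedes it below -/
import Mathlib

section
/- For every c ∈ (0,1) there exists R > 1 such that for all z ∈ D_R(0) the number c · z e^{z+1} does not lie in the real interval (−∞, −1]. -/
/-!
Write `z = x + iy`. Off the real axis and for `0 < |y| < π`, `z e^{z+1}` is real exactly when
`x sin y + y cos y = 0`; then `|z| = y / sin y`, and `sin y ≤ y cos (y/2)` turns
`x = -|z| cos y` into `x ≤ |z| - 2/|z|`. Hence `|c z e^{z+1}| ≤ c R e^{R - 2/R + 1}` on `D_R(0)`,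
a bound that tends to `c < 1` as `R → 1`. On the real axis `x e^{x+1} ≥ -1` already suffices.
-/

open Complex Topology

lemma neg_one_le_mul_exp_add_one (x : ℝ) : -1 ≤ x * Real.exp (x + 1) := by
  have h := Real.add_one_le_exp (-(x + 1))
  have hinv : Real.exp (-(x + 1)) * Real.exp (x + 1) = 1 := by
    rw [← Real.exp_add, neg_add_cancel, Real.exp_zero]
  nlinarith [Real.exp_pos (x + 1)]

lemma im_mul_exp_add_one (z : ℂ) :
    (z * exp (z + 1)).im =
      Real.exp (z.re + 1) * (z.re * Real.sin z.im + z.im * Real.cos z.im) := by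
  simp only [mul_im, exp_re, exp_im, add_re, add_im, one_re, one_im, add_zero]
  ring

lemma Real.sin_le_mul_cos_half {t : ℝ} (ht0 : 0 ≤ t) (htπ : t ≤ Real.pi) :
    Real.sin t ≤ t * Real.cos (t / 2) := by
  have hcos : 0 ≤ Real.cos (t / 2) :=
    Real.cos_nonneg_of_neg_pi_div_two_le_of_le (by linarith) (by linarith)
  have hsin : Real.sin (t / 2) ≤ t / 2 := Real.sin_le (by linarith)
  calc Real.sin t = 2 * Real.sin (t / 2) * Real.cos (t / 2) := by
        rw [← Real.sin_two_mul, mul_div_cancel₀ t two_ne_zero]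
    _ ≤ 2 * (t / 2) * Real.cos (t / 2) := by gcongr
    _ = t * Real.cos (t / 2) := by ring

lemma le_sqrt_sub_two_div_sqrt_of_mul_sin_add_mul_cos_eq_zero {x t : ℝ} (ht0 : 0 < t)
    (htπ : t < Real.pi) (h : x * Real.sin t + t * Real.cos t = 0) :
    x ≤ √(x ^ 2 + t ^ 2) - 2 / √(x ^ 2 + t ^ 2) := by
  have hsin : 0 < Real.sin t := Real.sin_pos_of_pos_of_lt_pi ht0 htπ
  set s := t / Real.sin t with hs
  have hs0 : 0 < s := div_pos ht0 hsin
  have hx : x = -s * Real.cos t := by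
    rw [hs]
    field_simp
    linarith
  have hnorm : √(x ^ 2 + t ^ 2) = s := by
    have hst : s * Real.sin t = t := div_mul_cancel₀ t hsin.ne'
    rw [← Real.sqrt_sq hs0.le, hx]
    congr 1
    linear_combination s ^ 2 * Real.sin_sq_add_cos_sq t - (s * Real.sin t + t) * hst
  have hhalf : 1 / s ≤ Real.cos (t / 2) := by
    rw [hs, one_div_div, div_le_iff₀ ht0, mul_comm]
    exact Real.sin_le_mul_cos_half ht0.le htπ.le
  have hcos : 2 * (1 / s) ^ 2 - 1 ≤ Real.cos t := by
    have := pow_le_pow_left₀ (by positivity) hhalf 2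
    rw [Real.cos_sq, mul_div_cancel₀ t two_ne_zero] at this
    linarith
  rw [hnorm, hx]
  calc -s * Real.cos t ≤ -s * (2 * (1 / s) ^ 2 - 1) :=
        mul_le_mul_of_nonpos_left hcos (neg_nonpos.mpr hs0.le)
    _ = s - 2 / s := by field_simp; ring

lemma re_le_norm_sub_two_div_norm_of_im_mul_exp_add_one_eq_zero {z : ℂ} (hne : z.im ≠ 0)
    (hπ : |z.im| < Real.pi) (h : (z * exp (z + 1)).im = 0) :
    z.re ≤ ‖z‖ - 2 / ‖z‖ := by
  rw [im_mul_exp_add_one, mul_eq_zero] at h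
  have hcurve := h.resolve_left (Real.exp_pos _).ne'
  have habs : z.re * Real.sin |z.im| + |z.im| * Real.cos |z.im| = 0 := by
    rcases abs_choice z.im with hy | hy <;> rw [hy]
    · exact hcurve
    · rw [Real.sin_neg, Real.cos_neg]; linarith
  rw [norm_eq_sqrt_sq_add_sq, ← sq_abs z.im]
  exact le_sqrt_sub_two_div_sqrt_of_mul_sin_add_mul_cos_eq_zero (abs_pos.mpr hne) hπ habs

lemma exists_one_lt_mul_mul_exp_lt_one {c : ℝ} (hc : c < 1) :
    ∃ R, 1 < R ∧ R < Real.pi ∧ c * R * Real.exp (R - 2 / R + 1) < 1 := by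
  have hcont : ContinuousAt (fun R : ℝ ↦ c * R * Real.exp (R - 2 / R + 1)) 1 := by
    fun_prop (disch := norm_num)
  have hnear : ∀ᶠ R in 𝓝 (1 : ℝ), R < Real.pi ∧ c * R * Real.exp (R - 2 / R + 1) < 1 :=
    (eventually_lt_nhds (by linarith [Real.pi_gt_three])).and
      (hcont.eventually_lt continuousAt_const (by norm_num [hc]))
  have hright : ∀ᶠ R in 𝓝[>] 1, R < Real.pi ∧
      c * R * Real.exp (R - 2 / R + 1) < 1 := hnear.filter_mono nhdsWithin_le_nhds
  obtain ⟨R, hR, hR1⟩ := (hright.and self_mem_nhdsWithin).exists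
  exact ⟨R, hR1, hR⟩

/-- Lemma 3(i): for every `c ∈ (0,1)` there exists `R > 1` such that `c · z e^{z+1}`
avoids the real interval `(-∞, -1]` for all `z` in the disk `D_R(0)`. -/
theorem scaled_w_avoids_slit (c : ℝ) (hc0 : 0 < c) (hc1 : c < 1) :
    ∃ R : ℝ, 1 < R ∧ ∀ z ∈ Metric.ball (0 : ℂ) R,
      ¬(((c : ℂ) * (z * Complex.exp (z + 1))).im = 0 ∧
        ((c : ℂ) * (z * Complex.exp (z + 1))).re ≤ -1) := by
  obtain ⟨R, hR1, hRπ, hcR⟩ := exists_one_lt_mul_mul_exp_lt_one hc1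
  refine ⟨R, hR1, fun z hz ⟨him, hre⟩ ↦ ?_⟩
  rw [mem_ball_zero_iff] at hz
  rw [im_ofReal_mul, mul_eq_zero, or_iff_right hc0.ne'] at him
  rw [re_ofReal_mul] at hre
  by_cases hy : z.im = 0
  · have hz_real : z = (z.re : ℂ) := Complex.ext rfl (by simpa using hy)
    rw [hz_real, ← ofReal_one, ← ofReal_add, ← ofReal_exp, ← ofReal_mul, ofReal_re] at hre
    nlinarith [neg_one_le_mul_exp_add_one z.re]
  · have hz0 : 0 < ‖z‖ := norm_pos_iff.mpr fun h ↦ hy (by simp [h])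
    have hx := re_le_norm_sub_two_div_norm_of_im_mul_exp_add_one_eq_zero hy
      (by linarith [abs_im_le_norm z]) him
    have hw : 1 ≤ c * (‖z‖ * Real.exp (z.re + 1)) := by
      have := abs_re_le_norm (z * exp (z + 1))
      rw [norm_mul, norm_exp, add_re, one_re] at this
      nlinarith [neg_le_abs (z * exp (z + 1)).re]
    refine lt_irrefl (1 : ℝ) ?_
    calc 1 ≤ c * (‖z‖ * Real.exp (z.re + 1)) := hw
      _ ≤ c * (‖z‖ * Real.exp (‖z‖ - 2 / ‖z‖ + 1)) := by gcongr
      _ < c * (R * Real.exp (R - 2 / R + 1)) := by gcongr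
      _ = c * R * Real.exp (R - 2 / R + 1) := by ring
      _ < 1 := hcR
end

section
/- Let ε ∈ (0, 1/100] and let y ∈ ℝ with sin(y) ≠ 0. If the complex number z = −y cot(y) + i y satisfies |z| < 1 + ε, then |z + 1| < ε^{1/4}. -/
open Complex

/-!
Write `x = |y|`. Then `|z| = x / |sin x|` and `|z + 1|² = (1 - x cot x)² + x²`. The half-angle
formula with the quartic Taylor bound for `cos (x/2)` gives `sin x ≤ x - x³/9` on `[0, 2]`, which
turns `|z| < 1 + ε` into `x² < 9ε`. Since `|sin x - x cos x| ≤ x³/2` and `sin x ≥ x/2`, also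
`|1 - x cot x| ≤ x²`, so `|z + 1|² ≤ x⁴ + x² < 81ε² + 9ε < √ε` once `ε ≤ 1/100`.
-/

theorem Real.sin_le_sub_cube_div_nine {x : ℝ} (hx₀ : 0 ≤ x) (hx₂ : x ≤ 2) :
    Real.sin x ≤ x - x ^ 3 / 9 := by
  have hsin_half : Real.sin (x / 2) ≤ x / 2 := Real.sin_le (by linarith)
  have hcos_half_nonneg : 0 ≤ Real.cos (x / 2) :=
    Real.cos_nonneg_of_neg_pi_div_two_le_of_le (by linarith [Real.pi_pos])
      (by linarith [Real.pi_gt_three])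
  have hcos_half : Real.cos (x / 2) ≤ 1 - (x / 2) ^ 2 / 2 + (x / 2) ^ 4 * (5 / 96) := by
    have h := Real.cos_bound (x := x / 2) (abs_le.2 ⟨by linarith, by linarith⟩)
    rw [abs_of_nonneg (by linarith : 0 ≤ x / 2)] at h
    linarith [(abs_le.mp h).2]
  calc Real.sin x = 2 * Real.sin (x / 2) * Real.cos (x / 2) := by
        rw [← Real.sin_two_mul, mul_div_cancel₀ x two_ne_zero]
    _ ≤ x * (1 - (x / 2) ^ 2 / 2 + (x / 2) ^ 4 * (5 / 96)) := by
        nlinarith [mul_le_mul_of_nonneg_right hsin_half hcos_half_nonneg]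
    _ ≤ x - x ^ 3 / 9 := by
        nlinarith [pow_nonneg hx₀ 3, mul_nonneg (pow_nonneg hx₀ 3) (sub_nonneg.2 hx₂)]

theorem Real.sq_lt_nine_mul_of_lt_mul_abs_sin {x ε : ℝ} (hx : 0 < x) (hε₀ : 0 ≤ ε)
    (hε₁ : ε ≤ 1) (h : x < (1 + ε) * |Real.sin x|) : x ^ 2 < 9 * ε := by
  have hx₂ : x < 2 := by nlinarith [Real.abs_sin_le_one x]
  rw [abs_of_nonneg (Real.sin_nonneg_of_nonneg_of_le_pi hx.le
    (by linarith [Real.pi_gt_three]))] at h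
  have hsin := Real.sin_le_sub_cube_div_nine hx.le hx₂.le
  nlinarith [mul_le_mul_of_nonneg_left hsin (by linarith : (0 : ℝ) ≤ 1 + ε), pow_pos hx 3]

theorem Real.abs_one_sub_mul_cot_le_sq {x : ℝ} (hx : 0 < x) (hx₃ : x ^ 2 ≤ 3) :
    |1 - x * (Real.cos x / Real.sin x)| ≤ x ^ 2 := by
  have hsin_lower : x / 2 ≤ Real.sin x := by
    nlinarith [Real.sin_ge_sub_cube hx.le]
  have hsin_pos : 0 < Real.sin x := by linarith
  have hnum : |Real.sin x - x * Real.cos x| ≤ x ^ 3 / 2 := by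
    refine abs_le.2 ⟨?_, ?_⟩
    · nlinarith [Real.sin_ge_sub_cube hx.le, Real.cos_le_one x]
    · nlinarith [Real.sin_le hx.le, Real.one_sub_sq_div_two_le_cos (x := x)]
  rw [show 1 - x * (Real.cos x / Real.sin x) = (Real.sin x - x * Real.cos x) / Real.sin x by
      field_simp, abs_div, abs_of_pos hsin_pos, div_le_iff₀ hsin_pos]
  nlinarith

theorem Real.abs_mul_cot_abs (y : ℝ) :
    |y| * (Real.cos |y| / Real.sin |y|) = y * (Real.cos y / Real.sin y) := by
  rcases abs_cases y with ⟨h, _⟩ | ⟨h, _⟩ <;> rw [h]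
  rw [Real.sin_neg, Real.cos_neg, div_neg, neg_mul_neg]

theorem Real.abs_sin_abs (y : ℝ) : |Real.sin (|y|)| = |Real.sin y| := by
  rcases abs_cases y with ⟨h, _⟩ | ⟨h, _⟩ <;> rw [h]
  rw [Real.sin_neg, abs_neg]

theorem norm_neg_mul_cot_add_mul_I {y : ℝ} (hy : Real.sin y ≠ 0) :
    ‖((-(y * (Real.cos y / Real.sin y)) : ℝ) + (y : ℝ) * Complex.I)‖ = |y| / |Real.sin y| := by
  rw [norm_add_mul_I, ← abs_div, ← Real.sqrt_sq_eq_abs]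
  congr 1
  field_simp
  linear_combination y ^ 2 * Real.sin_sq_add_cos_sq y

theorem norm_neg_mul_cot_add_mul_I_add_one (y : ℝ) :
    ‖(((-(y * (Real.cos y / Real.sin y)) : ℝ) + (y : ℝ) * Complex.I) + 1)‖
      = √((1 - y * (Real.cos y / Real.sin y)) ^ 2 + y ^ 2) := by
  rw [← norm_add_mul_I]
  push_cast
  ring_nf

theorem Real.rpow_one_fourth_eq_sqrt_sqrt {ε : ℝ} (hε : 0 ≤ ε) :
    ε ^ ((1 : ℝ) / 4) = √(√ε) := by
  rw [Real.sqrt_eq_rpow √ε, ← Real.rpow_div_two_eq_sqrt _ hε]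
  norm_num

theorem sq_add_self_lt_sqrt {t ε : ℝ} (ht : 0 ≤ t) (htε : t < 9 * ε) (hε : ε ≤ 1 / 100) :
    t ^ 2 + t < √ε := by
  have hsqrt_le : √ε ≤ 1 / 10 := by
    rw [Real.sqrt_le_left (by norm_num)]
    linarith
  have hsq := Real.sq_sqrt (by linarith : 0 ≤ ε)
  nlinarith [Real.sqrt_nonneg ε]

/-- If `ε ∈ (0, 1/100]` and `z = -y cot(y) + i y` satisfies `|z| < 1 + ε`,
then `|z + 1| < ε^{1/4}`. -/
theorem cot_curve_near_minus_one (ε y : ℝ) (hε0 : 0 < ε) (hε1 : ε ≤ 1 / 100)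
    (hy : Real.sin y ≠ 0)
    (h : ‖((-(y * (Real.cos y / Real.sin y)) : ℝ) + (y : ℝ) * Complex.I)‖ < 1 + ε) :
    ‖(((-(y * (Real.cos y / Real.sin y)) : ℝ) + (y : ℝ) * Complex.I) + 1)‖
      < ε ^ ((1 : ℝ) / 4) := by
  have hy₀ : 0 < |y| := abs_pos.2 fun h₀ => hy (by rw [h₀, Real.sin_zero])
  rw [norm_neg_mul_cot_add_mul_I hy, div_lt_iff₀ (abs_pos.2 hy), ← Real.abs_sin_abs] at h
  have hy_sq : |y| ^ 2 < 9 * ε :=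
    Real.sq_lt_nine_mul_of_lt_mul_abs_sin hy₀ hε0.le (by linarith) (by linarith)
  have hcot := Real.abs_one_sub_mul_cot_le_sq hy₀ (by linarith)
  rw [Real.abs_mul_cot_abs] at hcot
  have hcot_sq : (1 - y * (Real.cos y / Real.sin y)) ^ 2 ≤ (|y| ^ 2) ^ 2 :=
    sq_le_sq.2 (hcot.trans (le_abs_self _))
  rw [norm_neg_mul_cot_add_mul_I_add_one, Real.rpow_one_fourth_eq_sqrt_sqrt hε0.le, ← sq_abs y]
  refine Real.sqrt_lt_sqrt (by positivity) ?_
  linarith [sq_add_self_lt_sqrt (sq_nonneg _) hy_sq hε1]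
end

section
/- The function z ↦ (1 + z e^{z+1})/(z+1)², defined for z ≠ −1, extends to an entire function w̃ with w̃(−1) = 1/2 and w̃′(−1) = 1/3 (equivalently, z e^{z+1} = −1 + (z+1)²/2 + (z+1)³/3 + O((z+1)⁴) as z → −1). Consequently there exist δ ∈ (0,1) and C > 0 such that |(1+z) e^{z+1}| ≤ C |1 + z e^{z+1}|^{1/2} for all z ∈ D_δ(−1). -/
/-!
Put `u = z + 1`, so that `1 + z e^{z+1} = 1 + (u - 1) e^u = u²/2 + u³/3 + O(u⁴)`. The function
vanishes to second order at `-1`, so its double divided slope `w̃` at `-1` is entire, and the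
cubic Taylor bound for `exp` gives `‖w̃ z - (1/2 + u/3)‖ ≤ ‖u‖²`, which pins down `w̃(-1)`
and `w̃'(-1)`. Finally `1 + z e^{z+1} = u² w̃(z)` with `w̃(-1) ≠ 0`, so
`‖u‖ = O(‖1 + z e^{z+1}‖^{1/2})`, while `‖(1 + z) e^{z+1}‖ ≤ e ‖u‖` on the unit disk around `-1`.
-/

open Complex Filter Topology Asymptotics

theorem eq_and_hasDerivAt_of_norm_sub_le_sq {𝕜 F : Type*} [NontriviallyNormedField 𝕜]
    [NormedAddCommGroup F] [NormedSpace 𝕜 F] {g : 𝕜 → F} {a : 𝕜} {b c : F} {K : ℝ}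
    (hg : ContinuousAt g a)
    (h : ∀ᶠ z in 𝓝[≠] a, ‖g z - (b + (z - a) • c)‖ ≤ K * ‖z - a‖ ^ 2) :
    g a = b ∧ HasDerivAt g c a := by
  have hga : g a = b := by
    have hsmall : Tendsto (fun z => K * ‖z - a‖ ^ 2) (𝓝[≠] a) (𝓝 0) := by
      refine tendsto_nhdsWithin_of_tendsto_nhds ?_
      exact ((continuous_sub_right a).norm.pow 2).const_mul K |>.tendsto' a 0 (by simp)
    have hlin : Tendsto (fun z => b + (z - a) • c) (𝓝[≠] a) (𝓝 b) := by
      refine tendsto_nhdsWithin_of_tendsto_nhds ?_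
      exact ((continuous_sub_right a).smul continuous_const).const_add b
        |>.tendsto' a b (by simp)
    refine tendsto_nhds_unique (hg.tendsto.mono_left (nhdsWithin_le_nhds (s := {a}ᶜ))) ?_
    simpa using (squeeze_zero_norm' h hsmall).add hlin
  refine ⟨hga, hasDerivAt_iff_isLittleO.2 ?_⟩
  have hbound : (fun z => g z - g a - (z - a) • c) =O[𝓝 a] fun z => ‖z - a‖ ^ 2 := by
    refine IsBigO.of_bound K ?_
    filter_upwards [eventually_nhdsWithin_iff.1 h] with z hz
    rcases eq_or_ne z a with rfl | hza
    · simp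
    · simpa [hga, sub_sub] using hz hza
  exact hbound.trans_isLittleO (isLittleO_pow_sub_sub a one_lt_two)

theorem exists_norm_sub_le_mul_sqrt_norm_sq_mul {𝕜 : Type*} [NormedField 𝕜] {g : 𝕜 → 𝕜}
    {a : 𝕜} (hg : ContinuousAt g a) (ha : g a ≠ 0) :
    ∃ C > 0, ∀ᶠ z in 𝓝 a, ‖z - a‖ ≤ C * √‖(z - a) ^ 2 * g z‖ := by
  have hpos : 0 < ‖g a‖ / 2 := by positivity
  refine ⟨(√(‖g a‖ / 2))⁻¹, by positivity, ?_⟩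
  filter_upwards [hg.norm.eventually (lt_mem_nhds (half_lt_self (norm_pos_iff.2 ha)))]
    with z hz
  rw [norm_mul, norm_pow, Real.sqrt_mul (by positivity), Real.sqrt_sq (norm_nonneg _),
    inv_mul_eq_div, le_div_iff₀ (by positivity)]
  gcongr

theorem norm_mul_exp_le_of_norm_le_one {u : ℂ} (hu : ‖u‖ ≤ 1) :
    ‖u * exp u‖ ≤ Real.exp 1 * ‖u‖ := by
  rw [norm_mul, norm_exp, mul_comm]
  gcongr
  exact (re_le_norm u).trans hu

namespace WExpansion

noncomputable def f (z : ℂ) : ℂ := 1 + z * exp (z + 1)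

noncomputable def wTilde : ℂ → ℂ := dslope (dslope f (-1)) (-1)

theorem hasDerivAt_f (z : ℂ) : HasDerivAt f ((1 + z) * exp (z + 1)) z := by
  have hexp : HasDerivAt (fun z => exp (z + 1)) (exp (z + 1)) z := by
    simpa using ((hasDerivAt_id z).add_const 1).cexp
  rw [show (1 + z) * exp (z + 1) = 1 * exp (z + 1) + z * exp (z + 1) by ring]
  exact ((hasDerivAt_id' z).mul hexp).const_add 1

theorem f_neg_one : f (-1) = 0 := by simp [f]

theorem dslope_f_neg_one : dslope f (-1) (-1) = 0 := by
  simp [(hasDerivAt_f (-1)).deriv]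

theorem f_eq_sq_mul_wTilde (z : ℂ) : f z = (z + 1) ^ 2 * wTilde z := by
  rcases eq_or_ne z (-1) with rfl | hz
  · simp [f_neg_one]
  · have hz' : z + 1 ≠ 0 := by rwa [← sub_neg_eq_add, sub_ne_zero]
    rw [wTilde, dslope_of_ne _ hz, slope_def_field, dslope_of_ne _ hz, slope_def_field,
      f_neg_one, dslope_f_neg_one]
    field_simp
    ring

theorem wTilde_eq (z : ℂ) (hz : z ≠ -1) : wTilde z = f z / (z + 1) ^ 2 := by
  have hz' : z + 1 ≠ 0 := by rwa [← sub_neg_eq_add, sub_ne_zero]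
  rw [f_eq_sq_mul_wTilde, mul_div_cancel_left₀ _ (pow_ne_zero 2 hz')]

theorem differentiable_wTilde : Differentiable ℂ wTilde := by
  have hf : Differentiable ℂ f := fun z => (hasDerivAt_f z).differentiableAt
  simp only [← differentiableOn_univ] at hf ⊢
  rwa [wTilde, Complex.differentiableOn_dslope Filter.univ_mem,
    Complex.differentiableOn_dslope Filter.univ_mem]

theorem norm_f_sub_le (u : ℂ) (hu : ‖u‖ ≤ 1) :
    ‖f (u - 1) - (u ^ 2 / 2 + u ^ 3 / 3)‖ ≤ ‖u‖ ^ 4 := by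
  have hexp := Complex.exp_bound hu (n := 4) (by norm_num)
  simp only [Finset.sum_range_succ, Finset.sum_range_zero, Nat.factorial] at hexp
  norm_num at hexp
  have hu1 : ‖u - 1‖ ≤ 2 := (norm_sub_le _ _).trans (by simp; linarith)
  have hid : f (u - 1) - (u ^ 2 / 2 + u ^ 3 / 3)
      = (u - 1) * (exp u - (1 + u + u ^ 2 / 2 + u ^ 3 / 6)) + u ^ 4 / 6 := by
    simp only [f, sub_add_cancel]; ring
  calc ‖f (u - 1) - (u ^ 2 / 2 + u ^ 3 / 3)‖
      ≤ ‖u - 1‖ * ‖exp u - (1 + u + u ^ 2 / 2 + u ^ 3 / 6)‖ + ‖u‖ ^ 4 / 6 := by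
        rw [hid]; exact (norm_add_le _ _).trans_eq (by simp)
    _ ≤ 2 * (‖u‖ ^ 4 * (5 / 96)) + ‖u‖ ^ 4 / 6 := by gcongr
    _ ≤ ‖u‖ ^ 4 := by nlinarith [pow_nonneg (norm_nonneg u) 4]

theorem norm_wTilde_sub_le {z : ℂ} (hz : z ≠ -1) (h1 : ‖z + 1‖ ≤ 1) :
    ‖wTilde z - (1 / 2 + (z + 1) / 3)‖ ≤ ‖z + 1‖ ^ 2 := by
  have hz' : z + 1 ≠ 0 := by rwa [← sub_neg_eq_add, sub_ne_zero]
  have hf := norm_f_sub_le (z + 1) h1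
  rw [add_sub_cancel_right] at hf
  have hid : wTilde z - (1 / 2 + (z + 1) / 3)
      = (f z - ((z + 1) ^ 2 / 2 + (z + 1) ^ 3 / 3)) / (z + 1) ^ 2 := by
    rw [wTilde_eq z hz]; field_simp
  rw [hid, norm_div, norm_pow, div_le_iff₀ (by positivity)]
  exact hf.trans_eq (by ring)

theorem wTilde_neg_one_and_hasDerivAt :
    wTilde (-1) = 1 / 2 ∧ HasDerivAt wTilde (1 / 3) (-1) := by
  refine eq_and_hasDerivAt_of_norm_sub_le_sq (K := 1)
    differentiable_wTilde.continuous.continuousAt ?_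
  have hnear : ∀ᶠ z in 𝓝[≠] (-1 : ℂ), ‖z + 1‖ ≤ 1 := by
    filter_upwards [nhdsWithin_le_nhds (Metric.closedBall_mem_nhds (-1 : ℂ) one_pos)] with z hz
    simpa [dist_eq_norm] using hz
  filter_upwards [self_mem_nhdsWithin, hnear] with z hz h1
  simpa [div_eq_mul_inv] using norm_wTilde_sub_le hz h1

end WExpansion

open WExpansion

/-- Lemma 11(i): `(1 + z e^{z+1})/(z+1)²` extends to an entire function `w̃` with
`w̃(-1) = 1/2` and `w̃'(-1) = 1/3`; consequently `|w'(z)| = O(|1 + w(z)|^{1/2})`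
near `z = -1`. -/
theorem w_expansion_near_minus_one :
    ∃ wt : ℂ → ℂ, Differentiable ℂ wt ∧
      (∀ z : ℂ, z ≠ -1 → wt z = (1 + z * Complex.exp (z + 1)) / (z + 1) ^ 2) ∧
      wt (-1) = 1 / 2 ∧ deriv wt (-1) = 1 / 3 ∧
      ∃ δ : ℝ, 0 < δ ∧ δ < 1 ∧ ∃ C : ℝ, 0 < C ∧
        ∀ z ∈ Metric.ball (-1 : ℂ) δ,
          ‖(1 + z) * Complex.exp (z + 1)‖ ≤
            C * (‖1 + z * Complex.exp (z + 1)‖) ^ ((1 : ℝ) / 2) := by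
  obtain ⟨hval, hderiv⟩ := wTilde_neg_one_and_hasDerivAt
  refine ⟨wTilde, differentiable_wTilde, wTilde_eq, hval, hderiv.deriv, ?_⟩
  obtain ⟨C, hC, hnear⟩ := exists_norm_sub_le_mul_sqrt_norm_sq_mul
    (differentiable_wTilde.continuous.continuousAt (x := -1)) (by norm_num [hval])
  obtain ⟨ε, hε, hball⟩ := Metric.eventually_nhds_iff_ball.1 hnear
  refine ⟨min ε (1 / 2), by positivity, (min_le_right _ _).trans_lt (by norm_num),
    Real.exp 1 * C, by positivity, fun z hz => ?_⟩
  have hz1 : ‖z + 1‖ ≤ 1 := by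
    rw [Metric.mem_ball, dist_eq_norm, sub_neg_eq_add] at hz
    linarith [min_le_right ε (1 / 2)]
  have hsqrt := hball z (Metric.ball_subset_ball (min_le_left _ _) hz)
  rw [sub_neg_eq_add, ← f_eq_sq_mul_wTilde] at hsqrt
  rw [← Real.sqrt_eq_rpow, add_comm 1 z, mul_assoc]
  calc ‖(z + 1) * exp (z + 1)‖
      ≤ Real.exp 1 * ‖z + 1‖ := norm_mul_exp_le_of_norm_le_one hz1
    _ ≤ Real.exp 1 * (C * √‖f z‖) := by gcongr
end

section
/- Let δ ∈ (0,1). There exists a constant C > 0 (depending on δ) such that for every w ∈ Ω_δ with Re(1+w) < 0 one has (Im w)² > C · |Re(1+w)|³. -/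
/-!
Write `z = a + iy` and `w = z e^{z+1}`, so that `e^{a+1}` factors out of both parts of `w`.
Since `(1 - x) e^x ≤ 1`, we get `-Re(1 + w) ≤ e^{a+1} y²`. On the other hand `|z| < 1` forces
`a + 1 ≥ y²/2`, and then the Taylor expansions of `sin` and `cos` give
`|Im w| = e^{a+1} |a sin y + y cos y| ≥ e^{a+1} |y|³/16`. Hence
`|Re(1 + w)|³ ≤ 256 e^{a+1} (Im w)² < 256 e² (Im w)²`.
-/

open Complex

namespace Real

lemma one_sub_mul_exp_le_one (x : ℝ) : (1 - x) * exp x ≤ 1 := by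
  calc (1 - x) * exp x ≤ exp (-x) * exp x := by gcongr; exact one_sub_le_exp_neg x
    _ = 1 := by rw [← exp_add, neg_add_cancel, exp_zero]

lemma mul_sin_le_sq (y : ℝ) : y * sin y ≤ y ^ 2 :=
  calc y * sin y ≤ |y| * |sin y| := by rw [← abs_mul]; exact le_abs_self _
    _ ≤ |y| * |y| := mul_le_mul_of_nonneg_left abs_sin_le_abs (abs_nonneg y)
    _ = y ^ 2 := by rw [← sq, sq_abs]

lemma cube_div_sixteen_le_mul_sin_add_mul_cos {a y : ℝ} (hy : 0 ≤ y) (hay : a ^ 2 + y ^ 2 ≤ 1) :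
    y ^ 3 / 16 ≤ a * sin y + y * cos y := by
  have hy₁ : y ≤ 1 := by nlinarith
  have hcos : y * (1 - y ^ 2 / 2) ≤ y * cos y := by gcongr; exact one_sub_sq_div_two_le_cos
  rcases le_total 0 a with ha | ha
  · have : 0 ≤ a * sin y :=
      mul_nonneg ha (sin_nonneg_of_nonneg_of_le_pi hy (by linarith [pi_gt_three]))
    nlinarith
  · have hsin : sin y ≤ y - y ^ 3 / 6 + y ^ 5 / 100 := by
      have := (abs_le.1 (sin_bound (abs_le.2 ⟨by linarith, hy₁⟩))).2
      rw [abs_of_nonneg hy] at this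
      linarith
    have ha_ge : y ^ 2 / 2 - 1 ≤ a := by nlinarith
    have hy₃ : y ^ 3 ≤ y := pow_le_of_le_one hy hy₁ (by norm_num)
    have hy₅ : y ^ 5 ≤ y ^ 3 := pow_le_pow_of_le_one hy hy₁ (by norm_num)
    have hP : 0 ≤ y - y ^ 3 / 6 + y ^ 5 / 100 := by linarith [pow_nonneg hy 5]
    calc y ^ 3 / 16 ≤ (y ^ 2 / 2 - 1) * (y - y ^ 3 / 6 + y ^ 5 / 100) + y * (1 - y ^ 2 / 2) := by
          nlinarith [pow_nonneg hy 7]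
      _ ≤ a * (y - y ^ 3 / 6 + y ^ 5 / 100) + y * cos y := by
          linarith [mul_le_mul_of_nonneg_right ha_ge hP]
      _ ≤ a * sin y + y * cos y := by linarith [mul_le_mul_of_nonpos_left hsin ha]

lemma abs_cube_div_sixteen_le_abs_mul_sin_add_mul_cos {a y : ℝ} (hay : a ^ 2 + y ^ 2 ≤ 1) :
    |y| ^ 3 / 16 ≤ |a * sin y + y * cos y| := by
  rcases le_total 0 y with hy | hy
  · rw [abs_of_nonneg hy]
    exact (cube_div_sixteen_le_mul_sin_add_mul_cos hy hay).trans (le_abs_self _)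
  · have h := cube_div_sixteen_le_mul_sin_add_mul_cos (a := a) (neg_nonneg.2 hy) (by rwa [neg_sq])
    rw [sin_neg, cos_neg] at h
    rw [abs_of_nonpos hy]
    linarith [neg_abs_le (a * sin y + y * cos y)]

lemma neg_one_add_exp_mul_le_exp_mul_sq {a y : ℝ} (hcos : 0 ≤ cos y) :
    -(1 + exp (a + 1) * (a * cos y - y * sin y)) ≤ exp (a + 1) * y ^ 2 := by
  have h₁ : -a * exp (a + 1) * cos y ≤ cos y := by
    have := one_sub_mul_exp_le_one (a + 1)
    rw [show 1 - (a + 1) = -a by ring] at this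
    nlinarith
  have h₂ : exp (a + 1) * (y * sin y) ≤ exp (a + 1) * y ^ 2 := by
    gcongr; exact mul_sin_le_sq y
  nlinarith [cos_le_one y]

end Real

namespace Complex

lemma re_mul_exp_add_one (z : ℂ) : (z * exp (z + 1)).re =
    Real.exp (z.re + 1) * (z.re * Real.cos z.im - z.im * Real.sin z.im) := by
  simp only [mul_re, exp_re, exp_im, add_re, add_im, one_re, one_im, add_zero]; ring

lemma im_mul_exp_add_one (z : ℂ) : (z * exp (z + 1)).im =
    Real.exp (z.re + 1) * (z.re * Real.sin z.im + z.im * Real.cos z.im) := by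
  simp only [mul_im, exp_re, exp_im, add_re, add_im, one_re, one_im, add_zero]; ring

lemma abs_re_one_add_mul_exp_add_one_pow_three_lt {z : ℂ} (hz : ‖z‖ < 1)
    (hre : (1 + z * exp (z + 1)).re < 0) :
    |(1 + z * exp (z + 1)).re| ^ 3 < 256 * Real.exp 2 * (z * exp (z + 1)).im ^ 2 := by
  set w := z * exp (z + 1)
  set E := Real.exp (z.re + 1)
  have hnorm : z.re ^ 2 + z.im ^ 2 < 1 := by
    have h := pow_lt_one₀ (norm_nonneg z) hz two_ne_zero
    rw [Complex.sq_norm, normSq_apply] at h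
    linarith [sq z.re, sq z.im]
  have hcos : 0 ≤ Real.cos z.im := by
    apply Real.cos_nonneg_of_neg_pi_div_two_le_of_le <;> nlinarith [Real.pi_gt_three]
  have hre_le : |(1 + w).re| ≤ E * z.im ^ 2 := by
    rw [abs_of_neg hre, add_re, one_re, re_mul_exp_add_one]
    exact Real.neg_one_add_exp_mul_le_exp_mul_sq hcos
  have him_ge : E * (|z.im| ^ 3 / 16) ≤ |w.im| := by
    rw [im_mul_exp_add_one, abs_mul, Real.abs_exp]
    exact mul_le_mul_of_nonneg_left
      (Real.abs_cube_div_sixteen_le_abs_mul_sin_add_mul_cos hnorm.le) (Real.exp_pos _).le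
  have key : |(1 + w).re| ^ 3 ≤ 256 * E * w.im ^ 2 :=
    calc |(1 + w).re| ^ 3 ≤ (E * z.im ^ 2) ^ 3 := by gcongr
      _ = 256 * E * (E * (|z.im| ^ 3 / 16)) ^ 2 := by rw [← sq_abs z.im]; ring
      _ ≤ 256 * E * w.im ^ 2 := by rw [← sq_abs w.im]; gcongr
  have hE : E < Real.exp 2 := Real.exp_lt_exp.2 (by nlinarith)
  have him : 0 < w.im ^ 2 :=
    pos_of_mul_pos_right ((pow_pos (abs_pos.2 hre.ne) 3).trans_le key) (by positivity)
  calc |(1 + w).re| ^ 3 ≤ 256 * E * w.im ^ 2 := key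
    _ < 256 * Real.exp 2 * w.im ^ 2 := by gcongr

end Complex

/-- `Ω_δ`, the image of `D_δ(-1) ∩ D_1(0)` under `z ↦ z e^{z+1}`. -/
noncomputable def OmegaSet (δ : ℝ) : Set ℂ :=
  (fun z : ℂ => z * Complex.exp (z + 1)) '' (Metric.ball (-1 : ℂ) δ ∩ Metric.ball (0 : ℂ) 1)

theorem omega_boundary_cusp_general (δ : ℝ) :
    ∃ C : ℝ, 0 < C ∧ ∀ w ∈ OmegaSet δ, (1 + w).re < 0 →
      C * |(1 + w).re| ^ 3 < (w.im) ^ 2 := by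
  refine ⟨(256 * Real.exp 2)⁻¹, by positivity, ?_⟩
  rintro _ ⟨z, ⟨-, hz⟩, rfl⟩ hre
  rw [mem_ball_zero_iff] at hz
  rw [inv_mul_lt_iff₀ (by positivity)]
  exact abs_re_one_add_mul_exp_add_one_pow_three_lt hz hre

/-- Lemma 11(ii): for `w ∈ Ω_δ` with `Re(1+w) < 0` one has `(Im w)² > C |Re(1+w)|³`. -/
theorem omega_boundary_cusp (δ : ℝ) (hδ0 : 0 < δ) (hδ1 : δ < 1) :
    ∃ C : ℝ, 0 < C ∧ ∀ w ∈ OmegaSet δ, (1 + w).re < 0 →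
      C * |(1 + w).re| ^ 3 < (w.im) ^ 2 :=
  omega_boundary_cusp_general δ
end

section
/- Let δ ∈ (0,1). There exists a constant C > 0 (depending on δ) such that for every w ∈ Ω_δ the following holds: writing (1+w)/(−w) = a + i b with a, b real, if a < 0 then b² > C |a|³. -/
/-! Since `(1 + w) / (-w) = -1/w - 1`, its real part is `-(Re w + |w|²) / |w|²` and its imaginary
part is `Im w / |w|²`, so the claim amounts to `C (Re w + |w|²)³ < (Im w)² |w|²`. For
`w = z e^{z+1}` with `z = (x - 1) + y i`, one has `Re w + |w|² = eˣ cuspQ x y` and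
`Im w = eˣ cuspP x y`. On the disc `|z| < 1`, i.e. `x² + y² < 2x`, we have `x ≥ y²/2`, and
second-order Taylor bounds give `cuspQ x y ≤ 4 y²` and `|cuspP x y| ≥ |y|³/16`; hence
`cuspQ³ ≤ 2¹⁴ cuspP²`, while `|w| ≥ |z| > 1 - δ`. -/

open Complex

namespace Complex

theorem re_one_add_div_neg (w : ℂ) :
    ((1 + w) / -w).re = -(w.re + normSq w) / normSq w := by
  rw [div_re, normSq_neg, normSq_apply]
  simp only [add_re, one_re, add_im, one_im, neg_re, neg_im]
  ring

theorem im_one_add_div_neg (w : ℂ) : ((1 + w) / -w).im = w.im / normSq w := by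
  rw [div_im, normSq_neg]
  simp only [add_re, one_re, add_im, one_im, neg_re, neg_im]
  ring

theorem re_add_normSq_pos_of_re_one_add_div_neg_neg {w : ℂ} (h : ((1 + w) / -w).re < 0) :
    0 < w.re + normSq w := by
  rw [re_one_add_div_neg, neg_div, neg_lt_zero] at h
  rcases div_pos_iff.1 h with ⟨hQ, -⟩ | ⟨-, hs⟩
  · exact hQ
  · exact absurd hs (normSq_nonneg w).not_gt

theorem lt_im_one_add_div_neg_sq {C : ℝ} {w : ℂ} (h : ((1 + w) / -w).re < 0)
    (hC : C * (w.re + normSq w) ^ 3 < w.im ^ 2 * normSq w) :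
    C * |((1 + w) / -w).re| ^ 3 < ((1 + w) / -w).im ^ 2 := by
  have hQ := re_add_normSq_pos_of_re_one_add_div_neg_neg h
  have hs : 0 < normSq w := normSq_pos.2 <| by rintro rfl; simp at hQ
  rw [im_one_add_div_neg, re_one_add_div_neg, abs_div, abs_neg, abs_of_pos hQ,
    abs_of_pos hs, div_pow, div_pow, ← mul_div_assoc, div_lt_div_iff₀ (by positivity)
    (by positivity)]
  calc C * (w.re + normSq w) ^ 3 * normSq w ^ 2
      < w.im ^ 2 * normSq w * normSq w ^ 2 := by gcongr
    _ = w.im ^ 2 * normSq w ^ 3 := by ring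

end Complex

noncomputable def cuspQ (x y : ℝ) : ℝ :=
  Real.exp x * ((1 - x) ^ 2 + y ^ 2) - (1 - x) * Real.cos y - y * Real.sin y

noncomputable def cuspP (x y : ℝ) : ℝ :=
  y * Real.cos y - (1 - x) * Real.sin y

theorem cuspQ_abs (x y : ℝ) : cuspQ x |y| = cuspQ x y := by
  rcases abs_choice y with h | h <;> simp [cuspQ, h]

theorem cuspP_abs_sq (x y : ℝ) : cuspP x |y| ^ 2 = cuspP x y ^ 2 := by
  rcases abs_choice y with h | h
  · rw [h]
  · rw [h, cuspP, cuspP, Real.cos_neg, Real.sin_neg]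
    ring

theorem cuspQ_le {x y : ℝ} (hx0 : 0 ≤ x) (hx1 : x ≤ 1) (hy0 : 0 ≤ y) (hy1 : y ≤ 1) :
    cuspQ x y ≤ 4 * y ^ 2 := by
  have hexp : Real.exp x * (1 - x) ≤ 1 := by
    have := mul_le_mul_of_nonneg_left (Real.one_sub_le_exp_neg x) (Real.exp_pos x).le
    rwa [← Real.exp_add, add_neg_cancel, Real.exp_zero] at this
  have hexp3 : Real.exp x ≤ 3 := by
    linarith [Real.exp_le_exp.2 hx1, Real.exp_one_lt_d9]
  have hcos := Real.one_sub_sq_div_two_le_cos (x := y)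
  have hsin : 0 ≤ Real.sin y :=
    Real.sin_nonneg_of_nonneg_of_le_pi hy0 (by linarith [Real.pi_gt_three])
  have h1x : 0 ≤ 1 - x := by linarith
  unfold cuspQ
  nlinarith [mul_le_mul_of_nonneg_right hexp h1x, mul_le_mul_of_nonneg_left hcos h1x,
    mul_le_mul_of_nonneg_right hexp3 (sq_nonneg y), mul_nonneg hy0 hsin,
    mul_nonneg hx0 (sq_nonneg y)]

theorem cube_div_sixteen_le_cuspP {x y : ℝ} (hy0 : 0 ≤ y) (hx1 : x ≤ 1)
    (hc : x ^ 2 + y ^ 2 ≤ 2 * x) : y ^ 3 / 16 ≤ cuspP x y := by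
  have hx : y ^ 2 / 2 ≤ x := by nlinarith [sq_nonneg x]
  have hy1 : y ≤ 1 := by nlinarith
  have hcos := Real.one_sub_sq_div_two_le_cos (x := y)
  have hsin : Real.sin y ≤ y - y ^ 3 / 6 + y ^ 5 / 100 := by
    have := Real.sin_bound (abs_le.2 ⟨by linarith, hy1⟩)
    rw [abs_of_nonneg hy0] at this
    linarith [(abs_le.1 this).2]
  have h1x : 0 ≤ 1 - x := by linarith
  have hy5 : y ^ 5 ≤ y ^ 3 := pow_le_pow_of_le_one hy0 hy1 (by norm_num)
  unfold cuspP
  nlinarith [mul_le_mul_of_nonneg_left hcos hy0, mul_le_mul_of_nonneg_left hsin h1x,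
    mul_le_mul_of_nonneg_right hx (show 0 ≤ y * (1 - y ^ 2 / 6) by nlinarith),
    mul_nonneg h1x (pow_nonneg hy0 5)]

theorem cuspQ_cube_le {x y : ℝ} (hx1 : x ≤ 1) (hc : x ^ 2 + y ^ 2 ≤ 2 * x) :
    cuspQ x y ^ 3 ≤ 2 ^ 14 * cuspP x y ^ 2 := by
  rw [← cuspQ_abs, ← cuspP_abs_sq]
  rw [← sq_abs y] at hc
  have hx0 : 0 ≤ x := by nlinarith [sq_nonneg |y|]
  have hy1 : |y| ≤ 1 := by nlinarith [abs_nonneg y]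
  have hP := cube_div_sixteen_le_cuspP (abs_nonneg y) hx1 hc
  calc cuspQ x |y| ^ 3 ≤ (4 * |y| ^ 2) ^ 3 :=
        (Odd.pow_le_pow (by decide)).2 (cuspQ_le hx0 hx1 (abs_nonneg y) hy1)
    _ = 2 ^ 14 * (|y| ^ 3 / 16) ^ 2 := by ring
    _ ≤ 2 ^ 14 * cuspP x |y| ^ 2 := by gcongr

theorem cuspP_sq_pos {x y : ℝ} (hx1 : x ≤ 1) (hc : x ^ 2 + y ^ 2 ≤ 2 * x)
    (hq : 0 < cuspQ x y) : 0 < cuspP x y ^ 2 := by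
  rw [← cuspQ_abs] at hq
  rw [← cuspP_abs_sq]
  rw [← sq_abs y] at hc
  have hx0 : 0 ≤ x := by nlinarith [sq_nonneg |y|]
  have hy1 : |y| ≤ 1 := by nlinarith [abs_nonneg y]
  have hy : 0 < |y| := by
    nlinarith [cuspQ_le hx0 hx1 (abs_nonneg y) hy1, abs_nonneg y]
  have hP := cube_div_sixteen_le_cuspP (abs_nonneg y) hx1 hc
  have : 0 < cuspP x |y| := lt_of_lt_of_le (by positivity) hP
  positivity

namespace Complex

theorem im_mul_exp (z : ℂ) :
    (z * exp (z + 1)).im = Real.exp (z.re + 1) * cuspP (z.re + 1) z.im := by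
  simp only [mul_im, exp_re, exp_im, add_re, add_im, one_re, one_im, add_zero, cuspP]
  ring

theorem normSq_mul_exp (z : ℂ) :
    normSq (z * exp (z + 1)) = Real.exp (z.re + 1) ^ 2 * normSq z := by
  rw [normSq_mul, normSq_eq_norm_sq (exp _), norm_exp, add_re, one_re, mul_comm]

theorem re_add_normSq_mul_exp (z : ℂ) :
    (z * exp (z + 1)).re + normSq (z * exp (z + 1)) =
      Real.exp (z.re + 1) * cuspQ (z.re + 1) z.im := by
  rw [normSq_mul_exp, normSq_apply]
  simp only [mul_re, exp_re, exp_im, add_re, add_im, one_re, one_im, add_zero, cuspQ]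
  ring

theorem lt_im_sq_mul_normSq_mul_exp {δ : ℝ} (hδ : δ < 1) {z : ℂ}
    (hz1 : z ∈ Metric.ball (-1) δ) (hz0 : z ∈ Metric.ball 0 1)
    (hQ : 0 < (z * exp (z + 1)).re + normSq (z * exp (z + 1))) :
    (1 - δ) ^ 2 / 2 ^ 14 * ((z * exp (z + 1)).re + normSq (z * exp (z + 1))) ^ 3 <
      (z * exp (z + 1)).im ^ 2 * normSq (z * exp (z + 1)) := by
  rw [re_add_normSq_mul_exp] at hQ ⊢
  rw [im_mul_exp, normSq_mul_exp]
  rw [mem_ball_iff_norm, sub_neg_eq_add] at hz1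
  rw [mem_ball_zero_iff] at hz0
  have hx1 : z.re + 1 ≤ 1 := by
    linarith [show (z + 1).re ≤ ‖z + 1‖ from re_le_norm _, show (z + 1).re = z.re + 1 by simp]
  have hc : (z.re + 1) ^ 2 + z.im ^ 2 ≤ 2 * (z.re + 1) := by
    have : normSq z = ((z.re + 1) - 1) ^ 2 + z.im ^ 2 := by rw [normSq_apply]; ring
    nlinarith [normSq_eq_norm_sq z, norm_nonneg z]
  have hzδ : (1 - δ) ^ 2 < normSq z := by
    have : 1 - δ < ‖z‖ := by
      linarith [norm_sub_le (z + 1) z, show ‖(z + 1) - z‖ = 1 by simp]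
    rw [normSq_eq_norm_sq]
    exact pow_lt_pow_left₀ this (by linarith) two_ne_zero
  set x := z.re + 1
  set E := Real.exp x
  have hE : 1 ≤ E := Real.one_le_exp (by nlinarith [sq_nonneg z.im])
  have hq := pos_of_mul_pos_right hQ (by positivity)
  have hcube := cuspQ_cube_le hx1 hc
  have hP := cuspP_sq_pos hx1 hc hq
  calc (1 - δ) ^ 2 / 2 ^ 14 * (E * cuspQ x z.im) ^ 3
      = (1 - δ) ^ 2 * E ^ 3 * (cuspQ x z.im ^ 3 / 2 ^ 14) := by ring
    _ ≤ (1 - δ) ^ 2 * E ^ 3 * cuspP x z.im ^ 2 := by gcongr; linarith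
    _ < normSq z * E ^ 3 * cuspP x z.im ^ 2 := by gcongr
    _ ≤ normSq z * E ^ 4 * cuspP x z.im ^ 2 := by
        have := normSq_nonneg z
        gcongr
        norm_num
    _ = (E * cuspP x z.im) ^ 2 * (E ^ 2 * normSq z) := by ring

end Complex

theorem omega_boundary_cusp_ratio_general (δ : ℝ) (hδ1 : δ < 1) :
    ∃ C : ℝ, 0 < C ∧ ∀ w ∈ OmegaSet δ, ((1 + w) / (-w)).re < 0 →
      C * |((1 + w) / (-w)).re| ^ 3 < (((1 + w) / (-w)).im) ^ 2 := by
  refine ⟨(1 - δ) ^ 2 / 2 ^ 14, div_pos (pow_pos (sub_pos.2 hδ1) 2) (by norm_num), ?_⟩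
  rintro _ ⟨z, ⟨hz1, hz0⟩, rfl⟩ ha
  exact lt_im_one_add_div_neg_sq ha <|
    lt_im_sq_mul_normSq_mul_exp hδ1 hz1 hz0 (re_add_normSq_pos_of_re_one_add_div_neg_neg ha)

/-- Lemma 11(iii): for `w ∈ Ω_δ`, writing `(1+w)/(-w) = a + i b`, if `a < 0` then
`b² > C |a|³`. -/
theorem omega_boundary_cusp_ratio (δ : ℝ) (hδ0 : 0 < δ) (hδ1 : δ < 1) :
    ∃ C : ℝ, 0 < C ∧ ∀ w ∈ OmegaSet δ, ((1 + w) / (-w)).re < 0 →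
      C * |((1 + w) / (-w)).re| ^ 3 < (((1 + w) / (-w)).im) ^ 2 :=
  omega_boundary_cusp_ratio_general δ hδ1
end

section
/- Fix σ ∈ (0,1) and δ ∈ (0,1), and define Q_{α,β}(w) := ∫₀^σ |1 + w(1−x)|^{−α} x^{β} dx. Let α > 0, β > 0 and 0 ≤ γ < α satisfy β + 1 ≥ max(α, 3α/2 − γ). Then sup_{w ∈ Ω_δ} |1+w|^{γ} Q_{α,β}(w) < ∞. -/
open MeasureTheory Complex

/-- `Q_{α,β}(w) = ∫₀^σ |1 + w(1-x)|^{-α} x^β dx`. -/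
noncomputable def Qfun (σ α β : ℝ) (w : ℂ) : ℝ :=
  ∫ x in Set.Ioo (0 : ℝ) σ, ‖1 + w * (1 - (x : ℂ))‖ ^ (-α) * x ^ β

/-!
Every `w ∈ Ω_δ` is `(ζ - 1) e^ζ` with `ζ ≠ 0`, `|ζ| ≤ 1`, `|ζ - 1| ≤ 1`. Put `ε = |1 + w|`, so that
`1 + w(1 - x) = x + (1 - x)(1 + w)`. Its real part vanishes at a single `x₀ ∈ [0, ε]` and dominates
`|x - x₀|`; where `Re(1 + w) ≤ 0` the imaginary part controls `ε^{3/2}`, because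
`1 + (ζ - 1) e^ζ = ζ²/2 + ζ³/3 + ζ⁴/8 + O(|ζ|⁵)` and `Re ζ ≥ |ζ|²/2`. Hence on `(0, σ)`
`|1 + w(1 - x)| ≳ ε^{3/2} + |x - x₀|`, and `Q_{α,β}(w) ≲ ∫₀^σ (ε^{3/2} + |x - x₀|)^{-α} x^β dx`.
For `x > 2ε` the integrand times `ε^γ` is `≲ x^{β+γ-α}`, integrable since `β + γ - α > -1`;
for `x ≤ 2ε` it is `≲ ε^{γ+β+1} (ε^{3/2} + |x - x₀|)^{-α-1}`, whose integral is
`≲ ε^{γ+β+1-3α/2} ≤ 2^{γ+β+1-3α/2}` by `3α/2 - γ ≤ β + 1`.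
-/

open Set

lemma add_abs_rpow_neg_eq {η : ℝ} (hη : 0 < η) (q u : ℝ) :
    (η + |u|) ^ (-q) = η ^ (-q) * (1 + ‖u / η‖) ^ (-q) := by
  rw [← Real.mul_rpow hη.le (by positivity), Real.norm_eq_abs, abs_div, abs_of_pos hη,
    mul_add, mul_one, mul_div_cancel₀ _ hη.ne']

lemma integrable_add_abs_sub_rpow_neg {q η : ℝ} (hq : 1 < q) (hη : 0 < η) (x₀ : ℝ) :
    Integrable fun x : ℝ => (η + |x - x₀|) ^ (-q) := by
  have h := ((integrable_one_add_norm (E := ℝ) (μ := volume) (r := q) (by simpa using hq)).comp_div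
    hη.ne').const_mul (η ^ (-q))
  simp_rw [← add_abs_rpow_neg_eq hη] at h
  exact h.comp_sub_right x₀

lemma integral_add_abs_sub_rpow_neg {η : ℝ} (hη : 0 < η) (q x₀ : ℝ) :
    ∫ x : ℝ, (η + |x - x₀|) ^ (-q) = η ^ (1 - q) * ∫ v : ℝ, (1 + ‖v‖) ^ (-q) := by
  rw [integral_sub_right_eq_self (fun u => (η + |u|) ^ (-q)) x₀]
  simp_rw [add_abs_rpow_neg_eq hη]
  rw [integral_const_mul, Measure.integral_comp_div (fun v : ℝ => (1 + ‖v‖) ^ (-q)),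
    abs_of_pos hη, smul_eq_mul, ← mul_assoc, sub_eq_neg_add, Real.rpow_add hη, Real.rpow_one]

lemma setIntegral_Ioo_rpow {σ e : ℝ} (hσ : 0 ≤ σ) (he : -1 < e) :
    ∫ x in Ioo 0 σ, x ^ e = σ ^ (e + 1) / (e + 1) := by
  rw [← integral_Ioc_eq_integral_Ioo, ← intervalIntegral.integral_of_le hσ, integral_rpow (.inl he),
    Real.zero_rpow (by linarith), sub_zero]

lemma rpow_mul_kernel_le {α β γ ε η x₀ x : ℝ} (hα : 0 ≤ α) (hβ : 0 ≤ β) (hγ : 0 ≤ γ)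
    (hη : 0 < η) (hηε : η ≤ 2 * ε) (hx₀ : 0 ≤ x₀) (hx₀ε : x₀ ≤ ε) (hx : 0 < x) :
    ε ^ γ * ((η + |x - x₀|) ^ (-α) * x ^ β) ≤
      2 ^ α * x ^ (β + γ - α) + 2 ^ (β + 2) * ε ^ (γ + β + 1) * (η + |x - x₀|) ^ (-(α + 1)) := by
  have hε : 0 < ε := by linarith
  have hd : 0 < η + |x - x₀| := by positivity
  rcases le_or_gt x (2 * ε) with hx2 | hx2
  · have hd4 : η + |x - x₀| ≤ 4 * ε := by
      have : |x - x₀| ≤ 2 * ε := abs_le.2 ⟨by linarith, by linarith⟩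
      linarith
    have hsplit : (η + |x - x₀|) ^ (-α) = (η + |x - x₀|) ^ (-(α + 1)) * (η + |x - x₀|) := by
      rw [← Real.rpow_add_one hd.ne']; ring_nf
    calc ε ^ γ * ((η + |x - x₀|) ^ (-α) * x ^ β)
        ≤ ε ^ γ * ((η + |x - x₀|) ^ (-(α + 1)) * (4 * ε) * (2 * ε) ^ β) := by
          rw [hsplit]
          gcongr
      _ = 2 ^ (β + 2) * ε ^ (γ + β + 1) * (η + |x - x₀|) ^ (-(α + 1)) := by
          rw [Real.mul_rpow (by norm_num) hε.le, Real.rpow_add (by norm_num), Real.rpow_add hε,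
            Real.rpow_add hε, Real.rpow_one]
          norm_num
          ring
      _ ≤ _ := le_add_of_nonneg_left (by positivity)
  · have hhalf : x / 2 ≤ η + |x - x₀| := by
      have := le_abs_self (x - x₀)
      linarith
    calc ε ^ γ * ((η + |x - x₀|) ^ (-α) * x ^ β) ≤ x ^ γ * ((x / 2) ^ (-α) * x ^ β) := by
          have hγx : ε ^ γ ≤ x ^ γ := Real.rpow_le_rpow hε.le (by linarith) hγ
          have hαx : (η + |x - x₀|) ^ (-α) ≤ (x / 2) ^ (-α) :=
            Real.rpow_le_rpow_of_nonpos (by positivity) hhalf (by linarith)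
          gcongr
      _ = 2 ^ α * x ^ (β + γ - α) := by
          rw [Real.div_rpow hx.le (by norm_num), Real.rpow_neg (by norm_num : (0:ℝ) ≤ 2),
            div_inv_eq_mul, show β + γ - α = γ + -α + β by ring, Real.rpow_add hx,
            Real.rpow_add hx]
          ring
      _ ≤ _ := le_add_of_nonneg_right (by positivity)

lemma rpow_mul_setIntegral_kernel_le {α β γ σ ε η x₀ : ℝ} (hα : 0 < α) (hβ : 0 ≤ β)
    (hγ : 0 ≤ γ) (he : -1 < β + γ - α) (hσ : 0 ≤ σ) (hη : 0 < η) (hηε : η ≤ 2 * ε)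
    (hx₀ : 0 ≤ x₀) (hx₀ε : x₀ ≤ ε) :
    ε ^ γ * ∫ x in Ioo 0 σ, (η + |x - x₀|) ^ (-α) * x ^ β ≤
      2 ^ α * (σ ^ (β + γ - α + 1) / (β + γ - α + 1)) +
        2 ^ (β + 2) * ε ^ (γ + β + 1) * (η ^ (-α) * ∫ v : ℝ, (1 + ‖v‖) ^ (-(α + 1))) := by
  have hε : 0 < ε := by linarith
  have hpow : IntegrableOn (fun x : ℝ => x ^ (β + γ - α)) (Ioo 0 σ) :=
    (intervalIntegral.intervalIntegrable_rpow' he).1.mono_set Ioo_subset_Ioc_self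
  have hker := integrable_add_abs_sub_rpow_neg (q := α + 1) (by linarith) hη x₀
  calc ε ^ γ * ∫ x in Ioo 0 σ, (η + |x - x₀|) ^ (-α) * x ^ β
      = ∫ x in Ioo 0 σ, ε ^ γ * ((η + |x - x₀|) ^ (-α) * x ^ β) := (integral_const_mul _ _).symm
    _ ≤ ∫ x in Ioo 0 σ, (2 ^ α * x ^ (β + γ - α) +
          2 ^ (β + 2) * ε ^ (γ + β + 1) * (η + |x - x₀|) ^ (-(α + 1))) := by
        have hIoo : ∀ᵐ x ∂volume.restrict (Ioo 0 σ), 0 < x :=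
          (ae_restrict_mem measurableSet_Ioo).mono fun x hx => hx.1
        refine integral_mono_of_nonneg (hIoo.mono fun x hx => by positivity)
          ((hpow.const_mul _).add (hker.integrableOn.const_mul _))
          (hIoo.mono fun x hx => rpow_mul_kernel_le hα.le hβ hγ hη hηε hx₀ hx₀ε hx)
    _ = 2 ^ α * (σ ^ (β + γ - α + 1) / (β + γ - α + 1)) +
          2 ^ (β + 2) * ε ^ (γ + β + 1) * ∫ x in Ioo 0 σ, (η + |x - x₀|) ^ (-(α + 1)) := by
        rw [integral_add (hpow.const_mul _) (hker.integrableOn.const_mul _), integral_const_mul,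
          integral_const_mul, setIntegral_Ioo_rpow hσ he]
    _ ≤ _ := by
        gcongr
        calc ∫ x in Ioo 0 σ, (η + |x - x₀|) ^ (-(α + 1))
            ≤ ∫ x, (η + |x - x₀|) ^ (-(α + 1)) :=
              setIntegral_le_integral hker (.of_forall fun x => by positivity)
          _ = _ := by rw [integral_add_abs_sub_rpow_neg hη]; ring_nf

/-- The Taylor polynomial of degree `4` of `1 + (ζ - 1) e^ζ` at `0`. -/
noncomputable def taylorQuartic (ζ : ℂ) : ℂ := ζ ^ 2 / 2 + ζ ^ 3 / 3 + ζ ^ 4 / 8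

lemma taylorQuartic_re (ζ : ℂ) : (taylorQuartic ζ).re =
    (ζ.re ^ 2 - ζ.im ^ 2) / 2 + (ζ.re ^ 3 - 3 * ζ.re * ζ.im ^ 2) / 3 +
      ((ζ.re ^ 2 + ζ.im ^ 2) ^ 2 - 8 * ζ.re ^ 2 * ζ.im ^ 2) / 8 := by
  simp [taylorQuartic, pow_succ, mul_re, mul_im]
  ring

lemma taylorQuartic_im (ζ : ℂ) : (taylorQuartic ζ).im =
    ζ.im * (ζ.re + ζ.re ^ 2 - ζ.im ^ 2 / 3 + ζ.re * (ζ.re ^ 2 - ζ.im ^ 2) / 2) := by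
  simp [taylorQuartic, pow_succ, mul_re, mul_im]
  ring

lemma taylorQuartic_im_factor_ge {a b r : ℝ} (hab : a ^ 2 + b ^ 2 = r ^ 2)
    (ha : r ^ 2 ≤ 2 * a) : r ^ 2 / 6 ≤ a + a ^ 2 - b ^ 2 / 3 + a * (a ^ 2 - b ^ 2) / 2 := by
  have ha0 : 0 ≤ a := by nlinarith
  nlinarith [mul_nonneg ha0 (by nlinarith : (0 : ℝ) ≤ 4 / 3 * a - r ^ 2 / 2), pow_nonneg ha0 3]

lemma le_sq_of_taylorQuartic_re_le {a b r : ℝ} (hr : 0 ≤ r) (hr1 : r ≤ 1)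
    (hab : a ^ 2 + b ^ 2 = r ^ 2) (ha : r ^ 2 ≤ 2 * a)
    (hre : (a ^ 2 - b ^ 2) / 2 + (a ^ 3 - 3 * a * b ^ 2) / 3 +
      ((a ^ 2 + b ^ 2) ^ 2 - 8 * a ^ 2 * b ^ 2) / 8 ≤ 31 / 600 * r ^ 5) :
    r ^ 2 / 20 ≤ b ^ 2 := by
  have ha0 : 0 ≤ a := by nlinarith
  have ha1 : a ≤ 1 := by nlinarith
  nlinarith [mul_nonneg (sq_nonneg b) (by linarith : (0 : ℝ) ≤ 1 - a),
    mul_nonneg (sq_nonneg b) (by nlinarith : (0 : ℝ) ≤ 1 - a ^ 2), pow_nonneg ha0 3,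
    pow_nonneg hr 4]

section Taylor

variable {ζ : ℂ}

lemma le_abs_taylorQuartic_im (hζ : ‖ζ‖ ≤ 1) (hζ1 : ‖ζ - 1‖ ≤ 1)
    (hre : (taylorQuartic ζ).re ≤ 31 / 600 * ‖ζ‖ ^ 5) :
    67 / 600 * ‖ζ‖ ^ 3 ≤ |(taylorQuartic ζ).im| := by
  set a := ζ.re
  set b := ζ.im
  set r := ‖ζ‖
  have hr : 0 ≤ r := norm_nonneg ζ
  have hab : a ^ 2 + b ^ 2 = r ^ 2 := by rw [Complex.sq_norm, normSq_apply]; ring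
  have ha : r ^ 2 ≤ 2 * a := by
    have h := pow_le_one₀ (norm_nonneg _) hζ1 (n := 2)
    rw [Complex.sq_norm, normSq_apply, sub_re, sub_im, one_re, one_im] at h
    nlinarith
  rw [taylorQuartic_re] at hre
  rw [taylorQuartic_im]
  set B := a + a ^ 2 - b ^ 2 / 3 + a * (a ^ 2 - b ^ 2) / 2
  have hB : r ^ 2 / 6 ≤ B := taylorQuartic_im_factor_ge hab ha
  have hb : r ^ 2 / 20 ≤ b ^ 2 := le_sq_of_taylorQuartic_re_le hr hζ hab ha hre
  have hr6 : r ^ 6 ≤ r ^ 4 := pow_le_pow_of_le_one hr hζ (by norm_num)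
  have key : (67 / 600 * r ^ 3) ^ 2 ≤ (b * B) ^ 2 := by
    rcases le_total (b ^ 2) (a ^ 2) with hba | hab'
    · have ha0 : 0 ≤ a := by nlinarith
      have haB : a ≤ B := by simp only [B]; nlinarith [mul_nonneg ha0 (sub_nonneg.2 hba)]
      have : r ^ 2 / 2 * (r ^ 2 / 20) ≤ B ^ 2 * b ^ 2 :=
        mul_le_mul (by nlinarith) hb (by positivity) (sq_nonneg _)
      nlinarith
    · have : r ^ 2 / 2 * (r ^ 2 / 6) ^ 2 ≤ b ^ 2 * B ^ 2 :=
        mul_le_mul (by nlinarith) (pow_le_pow_left₀ (by positivity) hB 2) (by positivity)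
          (sq_nonneg _)
      nlinarith [pow_nonneg hr 6]
  exact (le_abs_self _).trans (sq_le_sq.1 key)

lemma norm_sub_taylorQuartic_le (hζ : ‖ζ‖ ≤ 1) (hζ1 : ‖ζ - 1‖ ≤ 1) :
    ‖1 + (ζ - 1) * exp ζ - taylorQuartic ζ‖ ≤ 31 / 600 * ‖ζ‖ ^ 5 := by
  set E := exp ζ - (1 + ζ + ζ ^ 2 / 2 + ζ ^ 3 / 6 + ζ ^ 4 / 24)
  have hE : ‖E‖ ≤ ‖ζ‖ ^ 5 / 100 := by
    have h := exp_bound hζ (n := 5) (by norm_num)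
    simp only [Finset.sum_range_succ, Finset.sum_range_zero, Nat.factorial] at h
    norm_num at h
    refine h.trans_eq ?_
    ring
  calc ‖1 + (ζ - 1) * exp ζ - taylorQuartic ζ‖ = ‖(ζ - 1) * E + ζ ^ 5 / 24‖ := by
        rw [taylorQuartic]; congr 1; ring
    _ ≤ 1 * (‖ζ‖ ^ 5 / 100) + ‖ζ‖ ^ 5 / 24 := by
        refine (norm_add_le _ _).trans ?_
        rw [norm_mul, norm_div, norm_pow]
        gcongr
        norm_num
    _ = 31 / 600 * ‖ζ‖ ^ 5 := by ring

lemma norm_one_add_sub_one_mul_exp_le (hζ : ‖ζ‖ ≤ 1) (hζ1 : ‖ζ - 1‖ ≤ 1) :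
    ‖1 + (ζ - 1) * exp ζ‖ ≤ 2 * ‖ζ‖ ^ 2 := by
  have hr := norm_nonneg ζ
  have hP : ‖taylorQuartic ζ‖ ≤ ‖ζ‖ ^ 2 / 2 + ‖ζ‖ ^ 3 / 3 + ‖ζ‖ ^ 4 / 8 := by
    refine norm_add₃_le.trans ?_
    simp [norm_pow]
  have h3 : ‖ζ‖ ^ 3 ≤ ‖ζ‖ ^ 2 := pow_le_pow_of_le_one hr hζ (by norm_num)
  have h4 : ‖ζ‖ ^ 4 ≤ ‖ζ‖ ^ 2 := pow_le_pow_of_le_one hr hζ (by norm_num)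
  have h5 : ‖ζ‖ ^ 5 ≤ ‖ζ‖ ^ 2 := pow_le_pow_of_le_one hr hζ (by norm_num)
  have := norm_le_norm_add_norm_sub' (1 + (ζ - 1) * exp ζ) (taylorQuartic ζ)
  linarith [norm_sub_taylorQuartic_le hζ hζ1, sq_nonneg ‖ζ‖]

lemma le_abs_im_of_re_nonpos (hζ : ‖ζ‖ ≤ 1) (hζ1 : ‖ζ - 1‖ ≤ 1)
    (hre : (1 + (ζ - 1) * exp ζ).re ≤ 0) : 3 / 50 * ‖ζ‖ ^ 3 ≤ |(1 + (ζ - 1) * exp ζ).im| := by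
  have hT := norm_sub_taylorQuartic_le hζ hζ1
  have hr5 : ‖ζ‖ ^ 5 ≤ ‖ζ‖ ^ 3 := pow_le_pow_of_le_one (norm_nonneg ζ) hζ (by norm_num)
  have hTre := (abs_le.1 ((abs_re_le_norm _).trans hT)).1
  have hTim := (abs_im_le_norm _).trans hT
  rw [sub_re] at hTre
  rw [sub_im, abs_sub_comm] at hTim
  have hP := le_abs_taylorQuartic_im hζ hζ1 (by linarith)
  have := abs_sub_abs_le_abs_sub (taylorQuartic ζ).im (1 + (ζ - 1) * exp ζ).im
  linarith

end Taylor

section Segment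

variable {s : ℂ} {x : ℝ}

lemma re_ofReal_add_mul (s : ℂ) (x : ℝ) : ((x : ℂ) + (1 - x) * s).re = x + (1 - x) * s.re := by
  simp

lemma im_ofReal_add_mul (s : ℂ) (x : ℝ) : ((x : ℂ) + (1 - x) * s).im = (1 - x) * s.im := by
  simp

lemma exists_abs_sub_le_norm_ofReal_add_mul (s : ℂ) :
    ∃ x₀, 0 ≤ x₀ ∧ x₀ ≤ ‖s‖ ∧ ∀ x : ℝ, 0 ≤ x → x ≤ 1 → |x - x₀| ≤ ‖(x : ℂ) + (1 - x) * s‖ := by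
  rcases le_or_gt 0 s.re with ht | ht
  · refine ⟨0, le_rfl, norm_nonneg s, fun x hx0 hx1 => ?_⟩
    refine le_trans ?_ (re_le_norm _)
    rw [re_ofReal_add_mul, sub_zero, abs_of_nonneg hx0]
    nlinarith
  · -- the real part of `x + (1 - x) s` vanishes exactly at `x₀`
    have h1t : 0 < 1 - s.re := by linarith
    refine ⟨-s.re / (1 - s.re), div_nonneg (by linarith) h1t.le, ?_, fun x hx0 hx1 => ?_⟩
    · calc -s.re / (1 - s.re) ≤ -s.re := div_le_self (by linarith) (by linarith)
        _ ≤ ‖s‖ := (neg_le_abs _).trans (abs_re_le_norm s)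
    · refine le_trans ?_ (abs_re_le_norm _)
      rw [re_ofReal_add_mul, show x + (1 - x) * s.re = (1 - s.re) * (x - -s.re / (1 - s.re)) by
        field_simp; ring, abs_mul, abs_of_pos h1t]
      exact le_mul_of_one_le_left (abs_nonneg _) (by linarith)

lemma mul_le_norm_ofReal_add_mul {θ : ℝ} (hθs : θ ≤ ‖s‖) (hθim : s.re ≤ 0 → θ ≤ |s.im|)
    (hx0 : 0 ≤ x) (hx1 : x ≤ 1) : (1 - x) * θ ≤ ‖(x : ℂ) + (1 - x) * s‖ := by
  have h1x : 0 ≤ 1 - x := by linarith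
  rcases le_or_gt s.re 0 with ht | ht
  · calc (1 - x) * θ ≤ |(1 - x) * s.im| := by
          rw [abs_mul, abs_of_nonneg h1x]; exact mul_le_mul_of_nonneg_left (hθim ht) h1x
      _ ≤ _ := by rw [← im_ofReal_add_mul]; exact abs_im_le_norm _
  · calc (1 - x) * θ ≤ (1 - x) * ‖s‖ := mul_le_mul_of_nonneg_left hθs h1x
      _ ≤ _ := by
        refine (sq_le_sq₀ (by positivity) (norm_nonneg _)).1 ?_
        rw [mul_pow, Complex.sq_norm, Complex.sq_norm, normSq_apply, normSq_apply,
          re_ofReal_add_mul, im_ofReal_add_mul]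
        nlinarith [mul_nonneg (mul_nonneg hx0 h1x) ht.le]

end Segment

lemma rpow_three_halves_sq {x : ℝ} (hx : 0 ≤ x) : (x ^ (3 / 2 : ℝ)) ^ 2 = x ^ 3 := by
  rw [← Real.rpow_natCast, ← Real.rpow_mul hx]
  norm_num

lemma norm_rpow_three_halves_le_abs_im {ζ : ℂ} (hζ : ‖ζ‖ ≤ 1) (hζ1 : ‖ζ - 1‖ ≤ 1)
    (hre : (1 + (ζ - 1) * exp ζ).re ≤ 0) :
    ‖1 + (ζ - 1) * exp ζ‖ ^ (3 / 2 : ℝ) / 50 ≤ |(1 + (ζ - 1) * exp ζ).im| := by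
  have hr := norm_nonneg ζ
  have hs := norm_one_add_sub_one_mul_exp_le hζ hζ1
  have hcube : (‖1 + (ζ - 1) * exp ζ‖ ^ (3 / 2 : ℝ)) ^ 2 ≤ (3 * ‖ζ‖ ^ 3) ^ 2 := by
    rw [rpow_three_halves_sq (norm_nonneg _)]
    calc ‖1 + (ζ - 1) * exp ζ‖ ^ 3 ≤ (2 * ‖ζ‖ ^ 2) ^ 3 := by gcongr
      _ ≤ (3 * ‖ζ‖ ^ 3) ^ 2 := by nlinarith [pow_nonneg hr 6]
  have := abs_le_of_sq_le_sq' hcube (by positivity)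
  linarith [le_abs_im_of_re_nonpos hζ hζ1 hre]

lemma exists_eq_of_mem_OmegaSet {δ : ℝ} (hδ : δ ≤ 1) {w : ℂ} (hw : w ∈ OmegaSet δ) :
    ∃ ζ : ℂ, ζ ≠ 0 ∧ ‖ζ‖ ≤ 1 ∧ ‖ζ - 1‖ ≤ 1 ∧ w = (ζ - 1) * exp ζ := by
  obtain ⟨z, ⟨hz1, hz0⟩, rfl⟩ := hw
  rw [Metric.mem_ball, dist_eq_norm, sub_neg_eq_add] at hz1
  rw [mem_ball_zero_iff] at hz0
  refine ⟨z + 1, fun h => ?_, by linarith, by simpa using hz0.le, by ring_nf⟩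
  rw [add_eq_zero_iff_eq_neg.1 h, norm_neg, norm_one] at hz0
  exact lt_irrefl _ hz0

lemma norm_one_add_mem_Ioc_of_mem_OmegaSet {δ : ℝ} (hδ : δ ≤ 1) {w : ℂ}
    (hw : w ∈ OmegaSet δ) : ‖1 + w‖ ∈ Ioc 0 2 := by
  obtain ⟨ζ, hζ0, hζ, hζ1, rfl⟩ := exists_eq_of_mem_OmegaSet hδ hw
  have hs := norm_one_add_sub_one_mul_exp_le hζ hζ1
  refine ⟨norm_pos_iff.2 fun h => ?_, by nlinarith [norm_nonneg ζ]⟩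
  -- `1 + (ζ - 1) e^ζ` vanishes only at `ζ = 0`, by the lower bound on its imaginary part
  have him := le_abs_im_of_re_nonpos hζ hζ1 (by rw [h, zero_re])
  rw [h, zero_im, abs_zero] at him
  have := norm_pos_iff.2 hζ0
  have : 0 < ‖ζ‖ ^ 3 := by positivity
  linarith

lemma exists_lower_bound_of_mem_OmegaSet {δ σ : ℝ} (hδ : δ ≤ 1) (hσ : σ < 1) {w : ℂ}
    (hw : w ∈ OmegaSet δ) : ∃ x₀, 0 ≤ x₀ ∧ x₀ ≤ ‖1 + w‖ ∧ ∀ x : ℝ, 0 ≤ x → x ≤ σ →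
      (1 - σ) / 100 * (‖1 + w‖ ^ (3 / 2 : ℝ) + |x - x₀|) ≤ ‖1 + w * (1 - x)‖ := by
  obtain ⟨hε0, hε2⟩ := norm_one_add_mem_Ioc_of_mem_OmegaSet hδ hw
  obtain ⟨ζ, -, hζ, hζ1, rfl⟩ := exists_eq_of_mem_OmegaSet hδ hw
  set s := 1 + (ζ - 1) * exp ζ
  have hθs : ‖s‖ ^ (3 / 2 : ℝ) / 50 ≤ ‖s‖ := by
    have : (‖s‖ ^ (3 / 2 : ℝ)) ^ 2 ≤ (50 * ‖s‖) ^ 2 := by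
      rw [rpow_three_halves_sq hε0.le]; nlinarith
    linarith [abs_le_of_sq_le_sq' this (by positivity)]
  obtain ⟨x₀, hx₀, hx₀s, hx₀le⟩ := exists_abs_sub_le_norm_ofReal_add_mul s
  refine ⟨x₀, hx₀, hx₀s, fun x hx0 hxσ => ?_⟩
  have hu : 1 + (ζ - 1) * exp ζ * (1 - x) = x + (1 - x) * s := by ring
  rw [hu]
  have h1 := hx₀le x hx0 (by linarith)
  have h2 := mul_le_norm_ofReal_add_mul hθs (norm_rpow_three_halves_le_abs_im hζ hζ1) hx0
    (by linarith : x ≤ 1)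
  have h3 : (1 - σ) * (‖s‖ ^ (3 / 2 : ℝ) / 50) ≤ (1 - x) * (‖s‖ ^ (3 / 2 : ℝ) / 50) := by
    gcongr
  nlinarith [abs_nonneg (x - x₀)]

lemma Qfun_le_of_le_norm {σ α β c η x₀ : ℝ} {w : ℂ} (hα : 0 ≤ α) (hβ : 0 ≤ β) (hc : 0 < c)
    (hη : 0 < η) (hw : ∀ x : ℝ, 0 ≤ x → x ≤ σ → c * (η + |x - x₀|) ≤ ‖1 + w * (1 - x)‖) :
    Qfun σ α β w ≤ c ^ (-α) * ∫ x in Ioo 0 σ, (η + |x - x₀|) ^ (-α) * x ^ β := by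
  have hcont : Continuous fun x : ℝ => c ^ (-α) * ((η + |x - x₀|) ^ (-α) * x ^ β) := by
    refine continuous_const.mul (.mul ?_ (continuous_id.rpow_const fun _ => .inr hβ))
    exact (continuous_const.add (continuous_id.sub continuous_const).abs).rpow_const
      fun _ => .inl (add_pos_of_pos_of_nonneg hη (abs_nonneg _)).ne'
  rw [Qfun, ← integral_const_mul]
  have hIoo := ae_restrict_mem (μ := volume) (measurableSet_Ioo (a := (0 : ℝ)) (b := σ))
  refine integral_mono_of_nonneg (hIoo.mono fun x hx => ?_)
    (hcont.integrableOn_Icc.mono_set Ioo_subset_Icc_self) (hIoo.mono fun x hx => ?_)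
  · have := hx.1.le
    dsimp only
    positivity
  · have hx0 := hx.1.le
    dsimp only
    rw [← mul_assoc, ← Real.mul_rpow hc.le (by positivity)]
    exact mul_le_mul_of_nonneg_right
      (Real.rpow_le_rpow_of_nonpos (by positivity) (hw x hx0 hx.2.le) (by linarith)) (by positivity)

theorem Q_bounded_on_omega_general (σ δ : ℝ) (hσ0 : 0 < σ) (hσ1 : σ < 1) (hδ1 : δ < 1)
    (α β γ : ℝ) (hα : 0 < α) (hβ : 0 < β) (hγ0 : 0 ≤ γ)
    (h2 : 3 * α / 2 - γ ≤ β + 1) :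
    ∃ M : ℝ, ∀ w ∈ OmegaSet δ, ‖1 + w‖ ^ γ * Qfun σ α β w ≤ M := by
  set c := (1 - σ) / 100
  have hc : 0 < c := by simp only [c]; linarith
  refine ⟨c ^ (-α) * (2 ^ α * (σ ^ (β + γ - α + 1) / (β + γ - α + 1)) + 2 ^ (β + 2) *
    (2 ^ (γ + β + 1 - 3 / 2 * α) * ∫ v : ℝ, (1 + ‖v‖) ^ (-(α + 1)))), fun w hw => ?_⟩
  obtain ⟨hε0, hε2⟩ := norm_one_add_mem_Ioc_of_mem_OmegaSet hδ1.le hw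
  obtain ⟨x₀, hx₀, hx₀ε, hlow⟩ := exists_lower_bound_of_mem_OmegaSet hδ1.le hσ1 hw
  set ε := ‖1 + w‖
  have hη : 0 < ε ^ (3 / 2 : ℝ) := by positivity
  have hηε : ε ^ (3 / 2 : ℝ) ≤ 2 * ε := by
    refine abs_le_of_sq_le_sq' ?_ (by positivity) |>.2
    rw [rpow_three_halves_sq hε0.le]
    nlinarith
  have hscale : ε ^ (γ + β + 1) * (ε ^ (3 / 2 : ℝ)) ^ (-α) ≤ 2 ^ (γ + β + 1 - 3 / 2 * α) := by
    rw [← Real.rpow_mul hε0.le, ← Real.rpow_add hε0,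
      show γ + β + 1 - 3 / 2 * α = γ + β + 1 + 3 / 2 * -α by ring]
    exact Real.rpow_le_rpow hε0.le hε2 (by linarith)
  calc ε ^ γ * Qfun σ α β w
      ≤ ε ^ γ * (c ^ (-α) * ∫ x in Ioo 0 σ, (ε ^ (3 / 2 : ℝ) + |x - x₀|) ^ (-α) * x ^ β) := by
        gcongr
        exact Qfun_le_of_le_norm hα.le hβ.le hc hη hlow
    _ = c ^ (-α) * (ε ^ γ * ∫ x in Ioo 0 σ, (ε ^ (3 / 2 : ℝ) + |x - x₀|) ^ (-α) * x ^ β) := by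
        ring
    _ ≤ _ := by
        gcongr
        refine (rpow_mul_setIntegral_kernel_le hα hβ.le hγ0 (by linarith) hσ0.le hη hηε hx₀
          hx₀ε).trans ?_
        rw [mul_assoc (2 ^ (β + 2)), ← mul_assoc (ε ^ (γ + β + 1))]
        gcongr

/-- Lemma 12: if `β > 0`, `0 ≤ γ < α` and `β + 1 ≥ max(α, 3α/2 - γ)`, then
`|1+w|^γ Q_{α,β}(w)` is bounded on `Ω_δ`. -/
theorem Q_bounded_on_omega (σ δ : ℝ) (hσ0 : 0 < σ) (hσ1 : σ < 1) (hδ0 : 0 < δ) (hδ1 : δ < 1)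
    (α β γ : ℝ) (hα : 0 < α) (hβ : 0 < β) (hγ0 : 0 ≤ γ) (hγα : γ < α)
    (h1 : α ≤ β + 1) (h2 : 3 * α / 2 - γ ≤ β + 1) :
    ∃ M : ℝ, ∀ w ∈ OmegaSet δ, ‖1 + w‖ ^ γ * Qfun σ α β w ≤ M :=
  Q_bounded_on_omega_general σ δ hσ0 hσ1 hδ1 α β γ hα hβ hγ0 h2
end

section
/- For every integer k ≥ 1 there exist polynomials P_{k,1}, …, P_{k,k} in k variables with rational coefficients such that for every open set U ⊆ ℂ, every analytic function h : U → ℂ, and every function g analytic on an open set containing h(U), one has for all z ∈ U: (g ∘ h)^{(k)}(z) = Σ_{j=1}^{k} (h′(z))^{max(2j−k, 0)} · g^{(j)}(h(z)) · P_{k,j}(h′(z), h″(z), …, h^{(k)}(z)). -/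
/-!
Let `D` be the derivation of `ℚ[X₀, X₁, …]` with `D Xᵢ = Xᵢ₊₁`, so that, with `Xᵢ` standing for
`h^{(i+1)}`, `D` is differentiation along `h`. Differentiating
`(g ∘ h)^{(k)} = ∑ⱼ g^{(j)}(h) · Q_{k,j}(h', h'', …)` once more gives the recursion
`Q_{k+1,j} = D Q_{k,j} + X₀ Q_{k,j-1}`. Since `D` lowers the `X₀`-adic valuation by at most one,
induction shows `X₀ ^ (2j - k) ∣ Q_{k,j}`; and `Q_{k,j}` only involves `X₀, …, X_{k-1}`, hence so
does the quotient, which is the polynomial `P_{k,j}`.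
-/

open MvPolynomial Finset

theorem Derivation.pow_sub_one_dvd_of_pow_dvd {R A : Type*} [CommSemiring R] [CommSemiring A]
    [Algebra R A] (D : Derivation R A A) {a b : A} {n : ℕ} (h : a ^ n ∣ b) :
    a ^ (n - 1) ∣ D b := by
  obtain ⟨c, rfl⟩ := h
  rw [D.leibniz, D.leibniz_pow, smul_eq_mul, smul_eq_mul, nsmul_eq_mul, smul_eq_mul]
  exact dvd_add ((pow_dvd_pow a (n.sub_le 1)).mul_right _) ⟨c * n * D a, by ring⟩

theorem MvPolynomial.vars_subset_vars_mul_left {σ R : Type*} [CommSemiring R] [NoZeroDivisors R]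
    {p : MvPolynomial σ R} (hp : p ≠ 0) (q : MvPolynomial σ R) : q.vars ⊆ (p * q).vars := by
  rcases eq_or_ne q 0 with rfl | hq
  · simp
  intro i hi
  rw [mem_vars_iff_degreeOf_ne_zero] at hi ⊢
  rw [degreeOf_mul_eq hp hq]
  omega

theorem AnalyticAt.hasDerivAt_iteratedDeriv {𝕜 : Type*} [NontriviallyNormedField 𝕜]
    [CompleteSpace 𝕜] {f : 𝕜 → 𝕜} {z : 𝕜} (hf : AnalyticAt 𝕜 f z) (n : ℕ) :
    HasDerivAt (iteratedDeriv n f) (iteratedDeriv (n + 1) f z) z := by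
  rw [iteratedDeriv_succ, iteratedDeriv_eq_iterate]
  exact (hf.iterated_deriv n).differentiableAt.hasDerivAt

namespace FaaDiBruno

variable (R : Type*) [CommSemiring R]

noncomputable def jetDeriv : Derivation R (MvPolynomial ℕ R) (MvPolynomial ℕ R) :=
  mkDerivation R fun i => X (i + 1)

noncomputable def poly : ℕ → ℕ → MvPolynomial ℕ R
  | 0, j => if j = 0 then 1 else 0
  | k + 1, 0 => jetDeriv R (poly k 0)
  | k + 1, j + 1 => jetDeriv R (poly k (j + 1)) + X 0 * poly k j

variable {R}

theorem jetDeriv_X (i : ℕ) : jetDeriv R (X i) = X (i + 1) := mkDerivation_X R _ i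

theorem jetDeriv_mem_supported {k : ℕ} {p : MvPolynomial ℕ R}
    (hp : p ∈ supported R (Set.Iio k)) : jetDeriv R p ∈ supported R (Set.Iio (k + 1)) := by
  induction hp using Algebra.adjoin_induction with
  | mem x hx =>
    obtain ⟨i, hi, rfl⟩ := hx
    rw [jetDeriv_X]
    exact Algebra.subset_adjoin (Set.mem_image_of_mem X (Nat.succ_lt_succ hi))
  | algebraMap r => simp
  | add x y _ _ hx hy => exact (jetDeriv R).map_add x y ▸ add_mem hx hy
  | mul x y hx' hy' hx hy =>
    have hmono := supported_mono (R := R) (Set.Iio_subset_Iio k.le_succ)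
    rw [Derivation.leibniz, smul_eq_mul, smul_eq_mul]
    exact add_mem (mul_mem (hmono hx') hy) (mul_mem (hmono hy') hx)

theorem poly_succ_zero (k : ℕ) : poly R (k + 1) 0 = 0 := by
  induction k with
  | zero => simp [poly]
  | succ k ih => rw [poly, ih, map_zero]

theorem poly_eq_zero_of_lt {k j : ℕ} (h : k < j) : poly R k j = 0 := by
  induction k generalizing j with
  | zero => simp [poly, h.ne']
  | succ k ih =>
    obtain ⟨j, rfl⟩ := Nat.exists_eq_add_of_lt (Nat.zero_lt_of_lt h)
    simp [poly, ih (by omega : k < j + 1), ih (by omega : k < j)]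

theorem poly_mem_supported (k j : ℕ) : poly R k j ∈ supported R (Set.Iio k) := by
  induction k generalizing j with
  | zero => unfold poly; split_ifs <;> simp
  | succ k ih =>
    cases j with
    | zero => exact jetDeriv_mem_supported (ih 0)
    | succ j =>
      exact add_mem (jetDeriv_mem_supported (ih _))
        (mul_mem (Algebra.subset_adjoin (Set.mem_image_of_mem X k.succ_pos))
          (supported_mono (Set.Iio_subset_Iio k.le_succ) (ih j)))

theorem X_zero_pow_dvd_poly (k j : ℕ) : (X 0 : MvPolynomial ℕ R) ^ (2 * j - k) ∣ poly R k j := by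
  induction k generalizing j with
  | zero => unfold poly; split_ifs with h <;> simp [h]
  | succ k ih =>
    cases j with
    | zero => simp
    | succ j =>
      refine dvd_add ?_ ?_
      · simpa [Nat.sub_sub] using (jetDeriv R).pow_sub_one_dvd_of_pow_dvd (ih (j + 1))
      · calc (X 0 : MvPolynomial ℕ R) ^ (2 * (j + 1) - (k + 1)) ∣ X 0 ^ (2 * j - k + 1) :=
              pow_dvd_pow _ (by omega)
          _ ∣ X 0 * poly R k j := by rw [pow_succ']; exact mul_dvd_mul_left _ (ih j)

theorem exists_poly_eq_X_pow_mul_rename [NoZeroDivisors R] [Nontrivial R] (k j : ℕ) :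
    ∃ P : MvPolynomial (Fin k) R, poly R k j = X 0 ^ (2 * j - k) * rename Fin.val P := by
  obtain ⟨q, hq⟩ := X_zero_pow_dvd_poly (R := R) k j
  have hvars : (q.vars : Set ℕ) ⊆ Set.range (Fin.val : Fin k → ℕ) := by
    rw [Fin.range_val]
    refine subset_trans ?_ (mem_supported.1 (poly_mem_supported (R := R) k j))
    rw [hq]
    exact_mod_cast vars_subset_vars_mul_left (pow_ne_zero _ (X_ne_zero 0)) q
  obtain ⟨P, rfl⟩ := exists_rename_eq_of_vars_subset_range q Fin.val Fin.val_injective hvars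
  exact ⟨P, hq⟩

theorem sum_mul_aeval_poly_succ {A : Type*} [CommSemiring A] [Algebra R A] (x c : ℕ → A)
    (k : ℕ) :
    ∑ j ∈ range (k + 2), c j * aeval x (poly R (k + 1) j) =
      ∑ j ∈ range (k + 1),
        (c (j + 1) * aeval x (X 0 * poly R k j) + c j * aeval x (jetDeriv R (poly R k j))) := by
  have htop : c (k + 1) * aeval x (jetDeriv R (poly R k (k + 1))) = 0 := by
    rw [poly_eq_zero_of_lt k.lt_succ_self, map_zero, map_zero, mul_zero]
  rw [sum_range_succ', sum_add_distrib, ← add_zero (∑ j ∈ range (k + 1), c j * _), ← htop,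
    ← sum_range_succ, sum_range_succ' (fun j => c j * _)]
  simp only [poly, map_add, mul_add, sum_add_distrib]
  ring

variable {𝕜 : Type*} [NontriviallyNormedField 𝕜]

theorem hasDerivAt_aeval [Algebra R 𝕜] {u : 𝕜 → ℕ → 𝕜} {z : 𝕜}
    (hu : ∀ i, HasDerivAt (fun w => u w i) (u z (i + 1)) z) (p : MvPolynomial ℕ R) :
    HasDerivAt (fun w => aeval (u w) p) (aeval (u z) (jetDeriv R p)) z := by
  induction p using MvPolynomial.induction_on with
  | C a => simpa using hasDerivAt_const z (algebraMap R 𝕜 a)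
  | add p q hp hq => simpa using hp.fun_add hq
  | mul_X p i hp =>
    rw [Derivation.leibniz, jetDeriv_X, smul_eq_mul, smul_eq_mul]
    simp only [map_add, map_mul, aeval_X]
    exact (hp.fun_mul (hu i)).congr_deriv (by ring)

theorem iteratedDeriv_comp_eq_sum [CompleteSpace 𝕜] [Algebra R 𝕜] (k : ℕ) {g h : 𝕜 → 𝕜}
    {z : 𝕜} (hh : AnalyticAt 𝕜 h z) (hg : AnalyticAt 𝕜 g (h z)) :
    iteratedDeriv k (g ∘ h) z = ∑ j ∈ range (k + 1),
      iteratedDeriv j g (h z) * aeval (fun i => iteratedDeriv (i + 1) h z) (poly R k j) := by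
  induction k generalizing z with
  | zero => simp [poly]
  | succ k ih =>
    have hnear : ∀ᶠ w in nhds z, iteratedDeriv k (g ∘ h) w = ∑ j ∈ range (k + 1),
        iteratedDeriv j g (h w) * aeval (fun i => iteratedDeriv (i + 1) h w) (poly R k j) := by
      filter_upwards [hh.eventually_analyticAt,
        hh.continuousAt.eventually hg.eventually_analyticAt] with w hhw hgw using ih hhw hgw
    have hterm (j : ℕ) : HasDerivAt
        (fun w => iteratedDeriv j g (h w) *
          aeval (fun i => iteratedDeriv (i + 1) h w) (poly R k j))
        (iteratedDeriv (j + 1) g (h z) *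
            aeval (fun i => iteratedDeriv (i + 1) h z) (X 0 * poly R k j) +
          iteratedDeriv j g (h z) *
            aeval (fun i => iteratedDeriv (i + 1) h z) (jetDeriv R (poly R k j))) z := by
      have hG := (hg.hasDerivAt_iteratedDeriv j).comp z (hh.hasDerivAt_iteratedDeriv 0)
      have hP := hasDerivAt_aeval (R := R) (u := fun w i => iteratedDeriv (i + 1) h w)
        (fun i => hh.hasDerivAt_iteratedDeriv (i + 1)) (poly R k j)
      refine (hG.fun_mul hP).congr_deriv ?_
      simp only [map_mul, aeval_X, Function.comp_apply]
      ring
    rw [iteratedDeriv_succ,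
      ((HasDerivAt.fun_sum fun j _ => hterm j).congr_of_eventuallyEq hnear).deriv,
      sum_mul_aeval_poly_succ]

end FaaDiBruno

/-- Lemma (Faà di Bruno form): for every `k ≥ 1` there are polynomials
`P_{k,1}, …, P_{k,k}` in `k` variables with rational coefficients such that
`(g ∘ h)^{(k)}(z) = Σ_{j=1}^k (h'(z))^{max(2j-k,0)} g^{(j)}(h(z)) P_{k,j}(h'(z),…,h^{(k)}(z))`
for all analytic `g`, `h`. -/
theorem faa_di_bruno_structure (k : ℕ) (hk : 1 ≤ k) :
    ∃ P : ℕ → MvPolynomial (Fin k) ℚ,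
      ∀ (U V : Set ℂ), IsOpen U → IsOpen V →
        ∀ (h g : ℂ → ℂ), AnalyticOnNhd ℂ h U → AnalyticOnNhd ℂ g V →
          (∀ z ∈ U, h z ∈ V) →
          ∀ z ∈ U,
            iteratedDeriv k (g ∘ h) z =
              ∑ j ∈ Finset.Icc 1 k,
                (deriv h z) ^ (2 * j - k) * iteratedDeriv j g (h z) *
                  MvPolynomial.aeval (fun i : Fin k => iteratedDeriv ((i : ℕ) + 1) h z)
                    (P j) := by
  choose P hP using FaaDiBruno.exists_poly_eq_X_pow_mul_rename (R := ℚ) k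
  refine ⟨P, fun U V _ _ h g hh hg hV z hz => ?_⟩
  have hsub : Icc 1 k ⊆ range (k + 1) := fun j hj => by simp at hj ⊢; omega
  rw [FaaDiBruno.iteratedDeriv_comp_eq_sum (R := ℚ) k (hh z hz) (hg _ (hV z hz)), ← sum_subset hsub]
  · refine sum_congr rfl fun j _ => ?_
    rw [hP, map_mul, map_pow, aeval_X, aeval_rename, iteratedDeriv_one, Function.comp_def]
    ring
  · intro j hj hj'
    obtain rfl : j = 0 := by simp at hj hj'; omega
    obtain ⟨k, rfl⟩ := Nat.exists_eq_add_of_le' hk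
    rw [FaaDiBruno.poly_succ_zero, map_zero, mul_zero]
end
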